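/- arXiv:2005.06682 — 2 statements merged into one kernel-verified Lean document; each statement's English description precedes it below -/
import Mathlib

section
/- Pushouts of R-categories are computed by applying the algebraic path problem to the pushout of underlying R-matrices: let f : Z → X and g : Z → Y be functions, let G, H, K be R-categories on X, Y, Z with f_*(K) ≤ G and g_*(K) ≤ H, and let i^X : X → X+_Z Y, i^Y : Y → X+_Z Y be the pushout of sets. Then P := F( i^X_*(G) ⊔ i^Y_*(H) ) is an R-category on X+_Z Y with i^X_*(G) ≤ P and i^Y_*(H) ≤ P, and for any R-category L on a set C and functions c¹ : X → C, c² : Y → C with c¹∘f = c²∘g, c¹_*(G) ≤ L and c²_*(H) ≤ L, the unique function u : X+_Z Y → C with u∘i^X = c¹ and u∘i^Y = c² satisfies u_*(P) ≤ L. -/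
open IsQuantale

section Defs

variable {R : Type*} [CompleteLattice R] [CommMonoid R]

/-- The matrix product of two `R`-matrices: `(M N)(i,k) = ⨆ j, M i j * N j k`. -/
def matMul {X : Type*} (M N : X → X → R) : X → X → R :=
  fun i k => ⨆ j, M i j * N j k

/-- The identity `R`-matrix `1_X`: `1` on the diagonal and `⊥` off the diagonal. -/
def matId (X : Type*) : X → X → R :=
  fun i j => ⨆ _ : i = j, (1 : R)

/-- The `n`-fold matrix power, with `M⁰ = 1_X`. -/
def matPow {X : Type*} (M : X → X → R) : ℕ → X → X → R
  | 0 => matId X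
  | n + 1 => matMul M (matPow M n)

/-- The solution of the algebraic path problem: `F(M) = ⨆ n, Mⁿ`. -/
def pathF {X : Type*} (M : X → X → R) : X → X → R :=
  fun i j => ⨆ n, matPow M n i j

/-- An `R`-category on `X` is an `R`-matrix `C` with `1_X ≤ C` and `C·C ≤ C`. -/
def IsRCat {X : Type*} (C : X → X → R) : Prop :=
  matId X ≤ C ∧ matMul C C ≤ C

/-- The pushforward of an `R`-matrix along a function. -/
def pushforward {X Y : Type*} (f : X → Y) (M : X → X → R) : Y → Y → R :=
  fun y y' => ⨆ p : {q : X × X // f q.1 = y ∧ f q.2 = y'}, M p.1.1 p.1.2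

/-- The block sum `M ⊕ N` of two `R`-matrices on the disjoint union. -/
def blockSum {X Y : Type*} (M : X → X → R) (N : Y → Y → R) : (X ⊕ Y) → (X ⊕ Y) → R
  | Sum.inl x, Sum.inl x' => M x x'
  | Sum.inr y, Sum.inr y' => N y y'
  | _, _ => ⊥

/-- A vertex `v` is a source of `M` if `M c v = ⊥` for all `c`. -/
def IsSource {X : Type*} (M : X → X → R) (v : X) : Prop := ∀ c, M c v = ⊥

/-- A vertex `v` is a sink of `M` if `M v c = ⊥` for all `c`. -/
def IsSink {X : Type*} (M : X → X → R) (v : X) : Prop := ∀ c, M v c = ⊥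

end Defs

/-- The relation generating the pushout of sets of `f : Z → X` and `g : Z → Y`. -/
def pushoutRel {Z X Y : Type*} (f : Z → X) (g : Z → Y) : (X ⊕ Y) → (X ⊕ Y) → Prop :=
  fun p q => ∃ z, p = Sum.inl (f z) ∧ q = Sum.inr (g z)

/-- The pushout of sets `X +_Z Y`: the quotient of the disjoint union `X ⊕ Y`
by the equivalence relation generated by `f z ∼ g z`. -/
def SetPushout {Z X Y : Type*} (f : Z → X) (g : Z → Y) : Type _ :=
  Quot (pushoutRel f g)

/-- The first injection `X → X +_Z Y` into the pushout of sets. -/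
def poInl {Z X Y : Type*} (f : Z → X) (g : Z → Y) : X → SetPushout f g :=
  fun x => Quot.mk _ (Sum.inl x)

/-- The second injection `Y → X +_Z Y` into the pushout of sets. -/
def poInr {Z X Y : Type*} (f : Z → X) (g : Z → Y) : Y → SetPushout f g :=
  fun y => Quot.mk _ (Sum.inr y)

section AuxLemmas

variable {R : Type*} [CompleteLattice R] [CommMonoid R] [IsQuantale R]

theorem mul_iSup' {ι : Sort*} (x : R) (f : ι → R) : x * ⨆ i, f i = ⨆ i, x * f i := by
  rw [iSup, mul_sSup_distrib, iSup_range]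

theorem iSup_mul' {ι : Sort*} (x : R) (f : ι → R) : (⨆ i, f i) * x = ⨆ i, f i * x := by
  rw [iSup, sSup_mul_distrib, iSup_range]

theorem matMul_id {X : Type*} (M : X → X → R) : matMul M (matId X) = M := by
  funext i k
  refine le_antisymm (iSup_le fun j => ?_) ?_
  · rw [matId, mul_iSup']
    exact iSup_le fun h => by subst h; simp
  · exact le_iSup_of_le k (by simp [matId])

theorem id_matMul {X : Type*} (M : X → X → R) : matMul (matId X) M = M := by
  funext i k
  refine le_antisymm (iSup_le fun j => ?_) ?_
  · rw [matId, iSup_mul']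
    exact iSup_le fun h => by subst h; simp
  · exact le_iSup_of_le i (by simp [matId])

theorem matMul_assoc {X : Type*} (A B C : X → X → R) :
    matMul (matMul A B) C = matMul A (matMul B C) := by
  funext i l
  simp only [matMul, iSup_mul', mul_iSup', mul_assoc]
  exact iSup_comm

theorem matMul_mono {X : Type*} {A A' B B' : X → X → R} (hA : A ≤ A') (hB : B ≤ B') :
    matMul A B ≤ matMul A' B' := fun i k =>
  iSup_le fun j => le_iSup_of_le j (mul_le_mul' (hA i j) (hB j k))

theorem matPow_add {X : Type*} (M : X → X → R) (m n : ℕ) :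
    matMul (matPow M m) (matPow M n) = matPow M (m + n) := by
  induction m with
  | zero => simp [matPow, id_matMul]
  | succ m ih =>
    show matMul (matMul M (matPow M m)) (matPow M n) = _
    rw [matMul_assoc, ih, Nat.add_right_comm]
    rfl

theorem matPow_le_pathF {X : Type*} (M : X → X → R) (n : ℕ) : matPow M n ≤ pathF M :=
  fun i j => le_iSup (fun n => matPow M n i j) n

theorem pathF_isRCat {X : Type*} (M : X → X → R) : IsRCat (pathF M) := by
  constructor
  · exact matPow_le_pathF M 0
  · intro i k
    refine iSup_le fun j => ?_
    show pathF M i j * pathF M j k ≤ _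
    rw [pathF, iSup_mul']
    refine iSup_le fun m => ?_
    rw [show pathF M j k = ⨆ n, matPow M n j k from rfl, mul_iSup']
    refine iSup_le fun n => ?_
    calc matPow M m i j * matPow M n j k
        ≤ matMul (matPow M m) (matPow M n) i k := le_iSup_of_le j le_rfl
      _ = matPow M (m + n) i k := by rw [matPow_add]
      _ ≤ pathF M i k := matPow_le_pathF M (m + n) i k

theorem le_pathF {X : Type*} (M : X → X → R) : M ≤ pathF M := by
  have h1 : matPow M 1 = M := by
    show matMul M (matId X) = M
    exact matMul_id M
  calc M = matPow M 1 := h1.symm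
    _ ≤ pathF M := matPow_le_pathF M 1

theorem pushforward_mono {X Y : Type*} (u : X → Y) {M N : X → X → R} (h : M ≤ N) :
    pushforward u M ≤ pushforward u N := fun y y' =>
  iSup_le fun p => le_iSup_of_le p (h p.1.1 p.1.2)

/-- Key universal-property lemma: if `L` is an `R`-category and `pushforward u M ≤ L`,
then `pushforward u (pathF M) ≤ L`. -/
theorem pushforward_pathF_le {X Y : Type*} (u : X → Y) (M : X → X → R) (L : Y → Y → R)
    (hL : IsRCat L) (h : pushforward u M ≤ L) : pushforward u (pathF M) ≤ L := by
  have hpow : ∀ n, pushforward u (matPow M n) ≤ L := by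
    intro n
    induction n with
    | zero =>
      intro y y'
      refine iSup_le fun p => ?_
      obtain ⟨⟨x, x'⟩, hx, hx'⟩ := p
      show matId X x x' ≤ L y y'
      refine iSup_le fun hxx => ?_
      subst hxx; subst hx; subst hx'
      exact le_trans (le_iSup_of_le rfl le_rfl) (hL.1 (u x) (u x))
    | succ n ih =>
      intro y y'
      refine iSup_le fun p => ?_
      obtain ⟨⟨x, x'⟩, hx, hx'⟩ := p
      show matMul M (matPow M n) x x' ≤ L y y'
      refine iSup_le fun j => ?_
      calc M x j * matPow M n j x'
          ≤ pushforward u M y (u j) * pushforward u (matPow M n) (u j) y' := by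
            refine mul_le_mul' ?_ ?_
            · exact le_iSup_of_le ⟨⟨x, j⟩, hx, rfl⟩ le_rfl
            · exact le_iSup_of_le ⟨⟨j, x'⟩, rfl, hx'⟩ le_rfl
        _ ≤ L y (u j) * L (u j) y' := mul_le_mul' (h y (u j)) (ih (u j) y')
        _ ≤ matMul L L y y' := le_iSup_of_le (u j) le_rfl
        _ ≤ L y y' := hL.2 y y'
  intro y y'
  refine iSup_le fun p => ?_
  show pathF M p.1.1 p.1.2 ≤ L y y'
  refine iSup_le fun n => ?_
  exact le_trans (le_iSup_of_le p le_rfl) (hpow n y y')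

theorem pushforward_comp_le {X Y W : Type*} (u : Y → W) (v : X → Y) (M : X → X → R) :
    pushforward u (pushforward v M) ≤ pushforward (u ∘ v) M := by
  intro w w'
  refine iSup_le fun p => ?_
  obtain ⟨⟨y, y'⟩, hy, hy'⟩ := p
  show pushforward v M y y' ≤ _
  refine iSup_le fun q => ?_
  obtain ⟨⟨x, x'⟩, hx, hx'⟩ := q
  exact le_iSup_of_le ⟨⟨x, x'⟩, by simp [Function.comp, hx, hy], by
    simp [Function.comp, hx', hy']⟩ le_rfl

theorem pushforward_sup {X Y : Type*} (u : X → Y) (M N : X → X → R) :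
    pushforward u (M ⊔ N) ≤ pushforward u M ⊔ pushforward u N := by
  intro y y'
  refine iSup_le fun p => ?_
  refine sup_le_sup (le_iSup_of_le p le_rfl) (le_iSup_of_le p le_rfl) |>.trans' ?_
  exact le_rfl

end AuxLemmas

/-- Pushouts of `R`-categories are computed by applying the algebraic path
problem to the pushout of underlying `R`-matrices: `P = F(i^X_*(G) ⊔ i^Y_*(H))` is an
`R`-category containing `i^X_*(G)` and `i^Y_*(H)`, and for any competing cocone of
`R`-categories `(c¹, c², L)`, the induced function `u` satisfies `u_*(P) ≤ L`. -/
theorem rcat_pushout {R : Type*} [CompleteLattice R] [CommMonoid R] [IsQuantale R]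
    {X Y Z C : Type*} (f : Z → X) (g : Z → Y)
    (G : X → X → R) (H : Y → Y → R) (K : Z → Z → R)
    (hGcat : IsRCat G) (hHcat : IsRCat H) (hKcat : IsRCat K)
    (hG : pushforward f K ≤ G) (hH : pushforward g K ≤ H) :
    IsRCat (pathF (pushforward (poInl f g) G ⊔ pushforward (poInr f g) H)) ∧
    pushforward (poInl f g) G ≤
      pathF (pushforward (poInl f g) G ⊔ pushforward (poInr f g) H) ∧
    pushforward (poInr f g) H ≤
      pathF (pushforward (poInl f g) G ⊔ pushforward (poInr f g) H) ∧
    (∀ (L : C → C → R), IsRCat L →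
      ∀ (c1 : X → C) (c2 : Y → C), c1 ∘ f = c2 ∘ g →
        pushforward c1 G ≤ L → pushforward c2 H ≤ L →
        ∀ u : SetPushout f g → C, u ∘ poInl f g = c1 → u ∘ poInr f g = c2 →
          pushforward u
            (pathF (pushforward (poInl f g) G ⊔ pushforward (poInr f g) H)) ≤ L) := by
  set M := pushforward (poInl f g) G ⊔ pushforward (poInr f g) H with hM
  refine ⟨pathF_isRCat M, le_trans le_sup_left (le_pathF M),
    le_trans le_sup_right (le_pathF M), ?_⟩
  intro L hL c1 c2 hcomm hc1 hc2 u hu1 hu2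
  refine pushforward_pathF_le u M L hL ?_
  refine le_trans (pushforward_sup u _ _) (sup_le ?_ ?_)
  · exact le_trans (pushforward_comp_le u (poInl f g) G) (by rw [hu1]; exact hc1)
  · exact le_trans (pushforward_comp_le u (poInr f g) H) (by rw [hu2]; exact hc2)
end

section
/- (Strict functoriality of blackboxed path problem on functional open R-matrices.) Let M be an R-matrix on A with legs i : X → A and j : Y → A, and N an R-matrix on B with legs i' : Y → B and j' : Z → B, such that every i(x) is a source of M, every j(y) is a sink of M, every i'(y) is a source of N, and every j'(z) is a sink of N, and such that j and i' are injective. Let P = A +_Y B be the pushout of sets of j and i', with injections a : A → P and b : B → P, and let S = a_*(M) ⊔ b_*(N). Then for all x ∈ X and z ∈ Z: F(S)( a(i(x)), b(j'(z)) ) = ⨆_{y∈Y} F(M)(i(x), j(y)) · F(N)(i'(y), j'(z)), where F(M) = ⨆_{n≥0} Mⁿ; that is, the blackboxed solution of the algebraic path problem of the composite equals the matrix product of the blackboxed solutions of the components: ■(★(M ∘ N)) = ■(★(M))·■(★(N)). -/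
open IsQuantale

/-!
Since every `j y` is a sink of `M`, a walk in the glued matrix that has entered `B` never returns
to `A`, and since `j` and `i'` are injective, `A` and `B` embed in the pushout and meet exactly
in the image of `Y`. Hence a walk of length `n` from `a c` to `b t` is an `M`-walk of length `m`
from `c` to some `j y` followed by an `N`-walk of length `k` from `i' y` to `t`, with
`m + k = n`; taking the supremum over `n` splits into the product of the two suprema.
-/

namespace Quantale

variable {α : Type*} [Semigroup α] [CompleteLattice α] [IsQuantale α] {ι : Sort*}

theorem mul_iSup_distrib' (x : α) (f : ι → α) : x * ⨆ i, f i = ⨆ i, x * f i := by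
  rw [iSup, mul_sSup_distrib, iSup_range]

theorem iSup_mul_distrib' (x : α) (f : ι → α) : (⨆ i, f i) * x = ⨆ i, f i * x := by
  rw [iSup, sSup_mul_distrib, iSup_range]

end Quantale

section Matrix

variable {R : Type*} [CompleteLattice R] [CommMonoid R] [IsQuantale R]

theorem matMul_sup_left {X : Type*} (M M' N : X → X → R) :
    matMul (M ⊔ M') N = matMul M N ⊔ matMul M' N := by
  ext i k
  simp only [matMul, Pi.sup_apply, Quantale.sup_mul_distrib, iSup_sup_eq]

theorem matMul_pushforward_apply {X P : Type*} (f : X → P) (M : X → X → R) (T : P → P → R)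
    (p r : P) :
    matMul (pushforward f M) T p r = ⨆ u, ⨆ _ : f u = p, ⨆ u', M u u' * T (f u') r := by
  apply le_antisymm
  · refine iSup_le fun q => ?_
    rw [pushforward, Quantale.iSup_mul_distrib]
    refine iSup_le ?_
    rintro ⟨⟨u, u'⟩, rfl, rfl⟩
    exact le_iSup_of_le u <| le_iSup_of_le rfl <| le_iSup_of_le u' le_rfl
  · refine iSup_le fun u => iSup_le fun hu => iSup_le fun u' => ?_
    refine le_iSup_of_le (f u') (mul_le_mul_left ?_ _)
    exact le_iSup_of_le ⟨(u, u'), hu, rfl⟩ le_rfl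

end Matrix

section Lattice

variable {α : Type*} [CompleteLattice α]

theorem iSup_add_eq_zero (g : ℕ → ℕ → α) :
    ⨆ m, ⨆ k, ⨆ _ : m + k = 0, g m k = g 0 0 := by
  refine le_antisymm (iSup_le fun m => iSup_le fun k => iSup_le fun h => ?_) ?_
  · obtain ⟨rfl, rfl⟩ := Nat.add_eq_zero_iff.mp h
    exact le_rfl
  · exact le_iSup_of_le 0 <| le_iSup_of_le 0 <| le_iSup_of_le rfl le_rfl

theorem iSup_add_eq_succ (g : ℕ → ℕ → α) (n : ℕ) :
    ⨆ m, ⨆ k, ⨆ _ : m + k = n + 1, g m k =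
      g 0 (n + 1) ⊔ ⨆ m, ⨆ k, ⨆ _ : m + k = n, g (m + 1) k := by
  refine le_antisymm (iSup_le fun m => iSup_le fun k => iSup_le fun h => ?_) ?_
  · rcases m with _ | m
    · obtain rfl : k = n + 1 := by omega
      exact le_sup_left
    · exact le_sup_of_le_right <| le_iSup_of_le m <| le_iSup_of_le k <|
        le_iSup_of_le (by omega) le_rfl
  · refine sup_le (le_iSup_of_le 0 <| le_iSup_of_le (n + 1) <| le_iSup_of_le (by omega) le_rfl)
      (iSup_le fun m => iSup_le fun k => iSup_le fun h => ?_)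
    exact le_iSup_of_le (m + 1) <| le_iSup_of_le k <| le_iSup_of_le (by omega) le_rfl

theorem iSup_iSup_add_eq (g : ℕ → ℕ → α) :
    ⨆ n, ⨆ m, ⨆ k, ⨆ _ : m + k = n, g m k = ⨆ m, ⨆ k, g m k := by
  rw [iSup_comm]
  refine iSup_congr fun m => ?_
  rw [iSup_comm]
  exact iSup_congr fun k => iSup_iSup_eq_right

end Lattice

section Pushout

variable {Y A B : Type*} {j : Y → A} {i' : Y → B}

-- Glued points `j y ∼ i' y` are represented on the `A` side.
noncomputable def SetPushout.repr (hi' : Function.Injective i') : SetPushout j i' → A ⊕ B :=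
  Quot.lift (Sum.elim Sum.inl (Function.extend i' (Sum.inl ∘ j) Sum.inr)) <| by
    rintro _ _ ⟨y, rfl, rfl⟩
    simp [hi'.extend_apply]

theorem SetPushout.repr_poInl (hi' : Function.Injective i') (c : A) :
    SetPushout.repr hi' (poInl j i' c) = Sum.inl c :=
  rfl

theorem SetPushout.repr_poInr_apply (hi' : Function.Injective i') (y : Y) :
    SetPushout.repr hi' (poInr j i' (i' y)) = Sum.inl (j y) :=
  hi'.extend_apply _ _ y

theorem SetPushout.repr_poInr_of_notMem (hi' : Function.Injective i') {d : B}
    (hd : d ∉ Set.range i') : SetPushout.repr hi' (poInr j i' d) = Sum.inr d :=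
  Function.extend_apply' _ _ d hd

theorem poInl_poInr_glue (y : Y) : poInl j i' (j y) = poInr j i' (i' y) :=
  Quot.sound ⟨y, rfl, rfl⟩

theorem poInl_injective (hi' : Function.Injective i') : Function.Injective (poInl j i') :=
  fun c c' h => Sum.inl_injective <| by
    rw [← SetPushout.repr_poInl hi', h, SetPushout.repr_poInl]

theorem poInl_eq_poInr_iff (hi' : Function.Injective i') {c : A} {d : B} :
    poInl j i' c = poInr j i' d ↔ ∃ y, c = j y ∧ d = i' y := by
  refine ⟨fun h => ?_, fun ⟨y, hc, hd⟩ => hc ▸ hd ▸ poInl_poInr_glue y⟩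
  have hrepr := congrArg (SetPushout.repr hi') h
  rw [SetPushout.repr_poInl] at hrepr
  by_cases hd : d ∈ Set.range i'
  · obtain ⟨y, rfl⟩ := hd
    rw [SetPushout.repr_poInr_apply, Sum.inl.injEq] at hrepr
    exact ⟨y, hrepr, rfl⟩
  · rw [SetPushout.repr_poInr_of_notMem hi' hd] at hrepr
    exact Sum.inl_ne_inr hrepr |>.elim

theorem poInr_injective (hj : Function.Injective j) (hi' : Function.Injective i') :
    Function.Injective (poInr j i') := by
  intro d d' h
  by_cases hd : d ∈ Set.range i'
  · obtain ⟨y, rfl⟩ := hd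
    obtain ⟨y', hy, rfl⟩ := (poInl_eq_poInr_iff hi').mp ((poInl_poInr_glue y).trans h)
    rw [hj hy]
  · have hd' : d' ∉ Set.range i' := by
      rintro ⟨y, rfl⟩
      obtain ⟨y', -, rfl⟩ := (poInl_eq_poInr_iff hi').mp ((poInl_poInr_glue y).trans h.symm)
      exact hd ⟨y', rfl⟩
    have hrepr := congrArg (SetPushout.repr hi') h
    rwa [SetPushout.repr_poInr_of_notMem hi' hd, SetPushout.repr_poInr_of_notMem hi' hd',
      Sum.inr.injEq] at hrepr

end Pushout

section Glue

open Quantale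

variable {R : Type*} [CompleteLattice R] [CommMonoid R] [IsQuantale R] {A B Y : Type*}
  {M : A → A → R} {N : B → B → R} {j : Y → A} {i' : Y → B}

variable (M N j i') in
def glueMatrix : SetPushout j i' → SetPushout j i' → R :=
  pushforward (poInl j i') M ⊔ pushforward (poInr j i') N

theorem matMul_glueMatrix_poInr (hMsink : ∀ y, IsSink M (j y)) (hj : Function.Injective j)
    (hi' : Function.Injective i') (T : SetPushout j i' → SetPushout j i' → R) (d : B)
    (r : SetPushout j i') :
    matMul (glueMatrix M N j i') T (poInr j i' d) r = ⨆ d', N d d' * T (poInr j i' d') r := by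
  simp only [glueMatrix, matMul_sup_left, Pi.sup_apply, matMul_pushforward_apply,
    (poInr_injective hj hi').eq_iff, iSup_iSup_eq_left]
  refine sup_eq_right.mpr (iSup₂_le fun u hu => iSup_le fun u' => ?_)
  obtain ⟨y, rfl, -⟩ := (poInl_eq_poInr_iff hi').mp hu
  simp [hMsink y u']

theorem matMul_glueMatrix_poInl (hi' : Function.Injective i')
    (T : SetPushout j i' → SetPushout j i' → R) (c : A) (r : SetPushout j i') :
    matMul (glueMatrix M N j i') T (poInl j i' c) r =
      (⨆ c', M c c' * T (poInl j i' c') r) ⊔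
        ⨆ y, ⨆ _ : c = j y, ⨆ d', N (i' y) d' * T (poInr j i' d') r := by
  simp only [glueMatrix, matMul_sup_left, Pi.sup_apply, matMul_pushforward_apply,
    (poInl_injective hi').eq_iff, iSup_iSup_eq_left, eq_comm (b := poInl j i' c),
    poInl_eq_poInr_iff hi', iSup_exists, iSup_and]
  congr 1
  rw [iSup_comm]
  refine iSup_congr fun y => ?_
  rw [iSup_comm]
  exact iSup_congr fun _ => iSup_iSup_eq_left

theorem matPow_glueMatrix_poInr (hMsink : ∀ y, IsSink M (j y)) (hj : Function.Injective j)
    (hi' : Function.Injective i') (n : ℕ) (d t : B) :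
    matPow (glueMatrix M N j i') n (poInr j i' d) (poInr j i' t) = matPow N n d t := by
  induction n generalizing d with
  | zero => simp only [matPow, matId, (poInr_injective hj hi').eq_iff]
  | succ n ih =>
    simp only [matPow, matMul_glueMatrix_poInr hMsink hj hi', ih]
    rfl

theorem matPow_glueMatrix_poInl_poInr (hMsink : ∀ y, IsSink M (j y))
    (hj : Function.Injective j) (hi' : Function.Injective i') (n : ℕ) (c : A) (t : B) :
    matPow (glueMatrix M N j i') n (poInl j i' c) (poInr j i' t) =
      ⨆ y, ⨆ m, ⨆ k, ⨆ _ : m + k = n, matPow M m c (j y) * matPow N k (i' y) t := by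
  induction n generalizing c with
  | zero =>
    simp only [iSup_add_eq_zero, matPow, matId, iSup_mul_distrib', one_mul,
      poInl_eq_poInr_iff hi', iSup_exists, iSup_and, eq_comm (a := t)]
  | succ n ih =>
    simp only [iSup_add_eq_succ]
    show matMul _ (matPow _ n) _ _ = _
    rw [matMul_glueMatrix_poInl hi']
    simp only [ih, matPow_glueMatrix_poInr hMsink hj hi']
    rw [iSup_sup_eq, sup_comm]
    congr 1
    · simp only [matPow, matMul, matId, iSup_mul_distrib', one_mul]
    · simp only [matPow, matMul, mul_iSup_distrib', iSup_mul_distrib', mul_assoc]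
      rw [iSup_comm]; refine iSup_congr fun y => ?_
      rw [iSup_comm]; refine iSup_congr fun m => ?_
      rw [iSup_comm]; refine iSup_congr fun k => ?_
      exact iSup_comm

theorem pathF_glueMatrix_poInl_poInr (hMsink : ∀ y, IsSink M (j y))
    (hj : Function.Injective j) (hi' : Function.Injective i') (c : A) (t : B) :
    pathF (glueMatrix M N j i') (poInl j i' c) (poInr j i' t) =
      ⨆ y, pathF M c (j y) * pathF N (i' y) t := by
  simp only [pathF, matPow_glueMatrix_poInl_poInr hMsink hj hi', mul_iSup_distrib',
    iSup_mul_distrib']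
  rw [iSup_comm]
  exact iSup_congr fun y => (iSup_iSup_add_eq _).trans iSup_comm

end Glue

theorem blackbox_star_strict_general {R : Type*} [CompleteLattice R] [CommMonoid R]
    [IsQuantale R] {A B X Y Z : Type*}
    (M : A → A → R) (i : X → A) (j : Y → A)
    (N : B → B → R) (i' : Y → B) (j' : Z → B)
    (hMsink : ∀ y : Y, IsSink M (j y))
    (hj : Function.Injective j) (hi' : Function.Injective i') :
    ∀ (x : X) (z : Z),
      pathF (pushforward (poInl j i') M ⊔ pushforward (poInr j i') N)
          (poInl j i' (i x)) (poInr j i' (j' z)) =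
        ⨆ y : Y, pathF M (i x) (j y) * pathF N (i' y) (j' z) :=
  fun x z => pathF_glueMatrix_poInl_poInr hMsink hj hi' (i x) (j' z)

/-- Strict functoriality of the blackboxed path problem on functional open
`R`-matrices: with `M` on `A` (legs `i : X → A`, `j : Y → A`), `N` on `B`
(legs `i' : Y → B`, `j' : Z → B`), inputs sources, outputs sinks, `j` and `i'`
injective, `P = A +_Y B` the pushout of sets with injections `a, b`, and
`S = a_*(M) ⊔ b_*(N)`, we have
`F(S)(a (i x), b (j' z)) = ⨆ y, F(M)(i x, j y) · F(N)(i' y, j' z)`,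
i.e. `■(★(M ∘ N)) = ■(★(M)) · ■(★(N))`. -/
theorem blackbox_star_strict {R : Type*} [CompleteLattice R] [CommMonoid R]
    [IsQuantale R] {A B X Y Z : Type*}
    (M : A → A → R) (i : X → A) (j : Y → A)
    (N : B → B → R) (i' : Y → B) (j' : Z → B)
    (hMsource : ∀ x : X, IsSource M (i x)) (hMsink : ∀ y : Y, IsSink M (j y))
    (hNsource : ∀ y : Y, IsSource N (i' y)) (hNsink : ∀ z : Z, IsSink N (j' z))
    (hj : Function.Injective j) (hi' : Function.Injective i') :
    ∀ (x : X) (z : Z),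
      pathF (pushforward (poInl j i') M ⊔ pushforward (poInr j i') N)
          (poInl j i' (i x)) (poInr j i' (j' z)) =
        ⨆ y : Y, pathF M (i x) (j y) * pathF N (i' y) (j' z) :=
  blackbox_star_strict_general M i j N i' j' hMsink hj hi'
end
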